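/- With f, g, r, k as above and h(n) = Σ_{d | n, f(n/d) = k} μ_r^{-1}(d), one has |h(n)| ≤ s_r(n)·τ(n) for all n ≥ 1, where s_r is the indicator of r-full numbers and τ the divisor function. -/

import Mathlib

open Finset
open scoped Classical

/-- `n` is `r`-free: no `r`-th power of a prime divides `n`. -/
def IsRFree (r n : ℕ) : Prop := ∀ p : ℕ, p.Prime → ¬ p ^ r ∣ n

/-- `n` is `r`-full: every prime dividing `n` satisfies `p^r ∣ n`. -/
def IsRFull (r n : ℕ) : Prop := ∀ p : ℕ, p.Prime → p ∣ n → p ^ r ∣ n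

/-- The indicator function of `r`-free numbers (as an integer-valued function). -/
noncomputable def muR (r n : ℕ) : ℤ := if IsRFree r n then 1 else 0

/-- The indicator function of `r`-full numbers (as an integer, 0 at 0). -/
noncomputable def sFull (r n : ℕ) : ℤ := if 1 ≤ n ∧ IsRFull r n then 1 else 0

/-- Values of the inverse of the indicator of `r`-free numbers at prime powers. -/
def cc (r α : ℕ) : ℤ := if α % r = 0 then 1 else if α % r = 1 then -1 else 0

/-- Explicit multiplicative candidate for the inverse of the indicator of `r`-free numbers. -/
noncomputable def nu0 (r n : ℕ) : ℤ := n.factorization.prod fun _ α => cc r α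

lemma cc_zero (r : ℕ) : cc r 0 = 1 := by simp [cc]

lemma abs_cc_le (r α : ℕ) : |cc r α| ≤ 1 := by
  unfold cc; split_ifs <;> simp

lemma cc_period (r α : ℕ) : cc r (α + r) = cc r α := by
  simp [cc, Nat.add_mod_right]

lemma nu0_one (r : ℕ) : nu0 r 1 = 1 := by simp [nu0]

lemma nu0_prime_pow (r p α : ℕ) (hp : p.Prime) : nu0 r (p ^ α) = cc r α := by
  rw [nu0, hp.factorization_pow]
  exact Finsupp.prod_single_index (cc_zero r)

lemma nu0_mul (r m n : ℕ) (hmn : m.Coprime n) (hm : m ≠ 0) (hn : n ≠ 0) :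
    nu0 r (m * n) = nu0 r m * nu0 r n := by
  rw [nu0, Nat.factorization_mul hm hn, Finsupp.prod_add_index_of_disjoint]
  · rfl
  · simpa [Nat.support_factorization] using Nat.Coprime.disjoint_primeFactors hmn

lemma abs_nu0_le (r n : ℕ) : |nu0 r n| ≤ 1 := by
  rw [nu0, Finsupp.prod, Finset.abs_prod]
  exact Finset.prod_le_one (fun i _ => abs_nonneg _) (fun i _ => abs_cc_le r _)

lemma muR_one (r : ℕ) (hr : 2 ≤ r) : muR r 1 = 1 := by
  have : IsRFree r 1 := by
    intro p hp hd
    have h1 : p ∣ 1 := dvd_trans (dvd_pow_self p (by omega : r ≠ 0)) hd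
    have := Nat.le_of_dvd one_pos h1
    have := hp.two_le
    omega
  simp [muR, this]

lemma muR_zero (r : ℕ) : muR r 0 = 0 := by
  have : ¬ IsRFree r 0 := fun h => h 2 Nat.prime_two (dvd_zero _)
  simp [muR, this]

lemma muR_prime_pow (r p i : ℕ) (hr : 2 ≤ r) (hp : p.Prime) :
    muR r (p ^ i) = if i < r then 1 else 0 := by
  by_cases h : i < r
  · have : IsRFree r (p ^ i) := by
      intro q hq hd
      have hq1 : q ∣ p ^ i := dvd_trans (dvd_pow_self q (by omega : r ≠ 0)) hd
      have hqp : q = p := (Nat.prime_dvd_prime_iff_eq hq hp).mp (hq.dvd_of_dvd_pow hq1)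
      subst hqp
      have := (Nat.pow_dvd_pow_iff_le_right hp.one_lt).mp hd
      omega
    simp [muR, this, h]
  · have : ¬ IsRFree r (p ^ i) := by
      intro hfree
      exact hfree p hp (pow_dvd_pow p (by omega))
    simp [muR, this, h]

lemma muR_mul (r m n : ℕ) (hr : 2 ≤ r) (hmn : m.Coprime n) :
    muR r (m * n) = muR r m * muR r n := by
  rcases eq_or_ne m 0 with rfl | hm
  · simp [muR_zero r]
  rcases eq_or_ne n 0 with rfl | hn
  · simp [muR_zero r]
  have key : IsRFree r (m * n) ↔ IsRFree r m ∧ IsRFree r n := by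
    constructor
    · intro h
      exact ⟨fun p hp hd => h p hp (hd.mul_right n), fun p hp hd => h p hp (hd.mul_left m)⟩
    · rintro ⟨h1, h2⟩ p hp hd
      have hpd : p ∣ m * n := dvd_trans (dvd_pow_self p (by omega : r ≠ 0)) hd
      rcases (Nat.Prime.dvd_mul hp).mp hpd with hpm | hpn
      · exact h1 p hp ((Nat.Coprime.pow_left r
          (Nat.Coprime.coprime_dvd_left hpm hmn)).dvd_of_dvd_mul_right hd)
      · exact h2 p hp ((Nat.Coprime.pow_left r
          (Nat.Coprime.coprime_dvd_right hpn hmn).symm).dvd_of_dvd_mul_left hd)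
  by_cases h1 : IsRFree r m <;> by_cases h2 : IsRFree r n <;> simp [muR, key, h1, h2]

lemma sum_cc_initial (r a : ℕ) (hr : 2 ≤ r) (ha : 1 ≤ a) (har : a < r) :
    ∑ l ∈ range (a + 1), cc r l = 0 := by
  obtain ⟨b, rfl⟩ : ∃ b, a = b + 1 := ⟨a - 1, by omega⟩
  rw [Finset.sum_range_succ']
  rw [Finset.sum_range_succ']
  have h0 : cc r 0 = 1 := by simp [cc]
  have h1 : cc r 1 = -1 := by
    simp only [cc]
    rw [Nat.mod_eq_of_lt (by omega)]
    norm_num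
  have hz : ∀ i ∈ range b, cc r (i + 1 + 1) = 0 := by
    intro i hi
    simp only [mem_range] at hi
    simp only [cc]
    rw [Nat.mod_eq_of_lt (by omega)]
    simp only [if_neg (by omega : ¬ (i + 1 + 1 = 0)), if_neg (by omega : ¬ (i + 1 + 1 = 1))]
  rw [Finset.sum_congr rfl hz]
  simp [h0, h1]

lemma sum_cc_window (r b : ℕ) (hr : 2 ≤ r) : ∑ i ∈ range r, cc r (b + i) = 0 := by
  induction b with
  | zero =>
    have : ∑ i ∈ range r, cc r (0 + i) = ∑ l ∈ range ((r-1) + 1), cc r l := by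
      apply Finset.sum_congr (by congr 1; omega) (fun i _ => by rw [Nat.zero_add])
    rw [this, sum_cc_initial r (r-1) hr (by omega) (by omega)]
  | succ b ih =>
    obtain ⟨s, hs⟩ : ∃ s, s + 1 = r := ⟨r - 1, by omega⟩
    have e1 : ∑ i ∈ range r, cc r (b + 1 + i)
        = (∑ i ∈ range s, cc r (b + 1 + i)) + cc r (b + 1 + s) := by
      rw [← hs, Finset.sum_range_succ]
    have e2 : ∑ i ∈ range r, cc r (b + i) = (∑ i ∈ range s, cc r (b + 1 + i)) + cc r b := by
      rw [← hs, Finset.sum_range_succ']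
      congr 1
      · exact Finset.sum_congr rfl fun i _ => by congr 1; omega
    have e4 : cc r (b + 1 + s) = cc r b := by
      have : b + 1 + s = b + r := by omega
      rw [this, cc_period r b]
    rw [e1, e4]
    rw [e2] at ih
    omega

lemma window_conv (r a : ℕ) (hr : 2 ≤ r) (ha : 1 ≤ a) :
    ∑ i ∈ range (a + 1), (if i < r then (1:ℤ) else 0) * cc r (a - i) = 0 := by
  by_cases hcase : a < r
  · have e1 : ∀ i ∈ range (a + 1),
        (if i < r then (1:ℤ) else 0) * cc r (a - i) = cc r (a - i) := by
      intro i hi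
      simp only [mem_range] at hi
      rw [if_pos (by omega), one_mul]
    rw [Finset.sum_congr rfl e1]
    have := Finset.sum_range_reflect (fun l => cc r l) (a + 1)
    simp only [Nat.add_sub_cancel] at this
    rw [this]
    exact sum_cc_initial r a hr ha hcase
  · push_neg at hcase
    have hsub : range r ⊆ range (a + 1) := Finset.range_subset_range.mpr (by omega)
    rw [← Finset.sum_subset hsub]
    · have e1 : ∀ i ∈ range r,
          (if i < r then (1:ℤ) else 0) * cc r (a - i) = cc r (a - i) := by
        intro i hi
        simp only [mem_range] at hi
        rw [if_pos hi, one_mul]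
      rw [Finset.sum_congr rfl e1]
      have := Finset.sum_range_reflect (fun j => cc r (a - r + 1 + j)) r
      have e2 : ∀ j ∈ range r, cc r (a - r + 1 + (r - 1 - j)) = cc r (a - j) := by
        intro j hj
        simp only [mem_range] at hj
        congr 1
        omega
      rw [Finset.sum_congr rfl e2] at this
      rw [this]
      exact sum_cc_window r (a - r + 1) hr
    · intro i hi hni
      simp only [mem_range] at hi hni
      rw [if_neg (by omega), zero_mul]

lemma sum_divisors_mul_coprime (F : ℕ → ℤ) {m n : ℕ} (hmn : m.Coprime n) :
    ∑ d ∈ (m * n).divisors, F d = ∑ i ∈ m.divisors, ∑ j ∈ n.divisors, F (i * j) := by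
  rw [Nat.divisors_mul, Finset.mul_def, Finset.sum_image, Finset.sum_product]
  rintro ⟨i, j⟩ hij ⟨i', j'⟩ hij' heq
  simp only [Finset.mem_coe, Finset.coe_product, Set.mem_prod, Finset.mem_product, Nat.mem_divisors] at hij hij'
  obtain ⟨⟨him, hm0⟩, hjn, hn0⟩ := hij
  obtain ⟨⟨him', -⟩, hjn', -⟩ := hij'
  simp only at heq
  have hii' : i = i' := by
    apply Nat.dvd_antisymm
    · exact (Nat.Coprime.coprime_dvd_left him
        (Nat.Coprime.coprime_dvd_right hjn' hmn)).dvd_of_dvd_mul_right (heq ▸ Dvd.intro j rfl)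
    · exact (Nat.Coprime.coprime_dvd_left him'
        (Nat.Coprime.coprime_dvd_right hjn hmn)).dvd_of_dvd_mul_right (heq ▸ Dvd.intro j' rfl)
  subst hii'
  have hipos : 0 < i := Nat.pos_of_dvd_of_pos him (Nat.pos_of_ne_zero hm0)
  have : j = j' := Nat.eq_of_mul_eq_mul_left hipos heq
  simp [this]

lemma conv_nu0 (r : ℕ) (hr : 2 ≤ r) (n : ℕ) (hn : 2 ≤ n) :
    ∑ d ∈ n.divisors, muR r d * nu0 r (n / d) = 0 := by
  set p := n.minFac with hpdef
  have hn0 : n ≠ 0 := by omega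
  have hp : p.Prime := Nat.minFac_prime (by omega)
  have hpd : p ∣ n := Nat.minFac_dvd n
  set a := n.factorization p with hadef
  have ha : 1 ≤ a := hp.factorization_pos_of_dvd hn0 hpd
  set m := ordCompl[p] n with hmdef
  have hm0 : m ≠ 0 := (Nat.ordCompl_pos p hn0).ne'
  have hcop : Nat.Coprime (p ^ a) m := Nat.Coprime.pow_left _ (Nat.coprime_ordCompl hp hn0)
  have hneq : p ^ a * m = n := Nat.ordProj_mul_ordCompl_eq_self n p
  rw [← hneq, sum_divisors_mul_coprime _ hcop]
  rw [Nat.sum_divisors_prime_pow hp]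
  have key : ∀ i ∈ range (a + 1),
      ∑ j ∈ m.divisors, muR r (p ^ i * j) * nu0 r (p ^ a * m / (p ^ i * j))
      = ((if i < r then (1:ℤ) else 0) * cc r (a - i))
        * ∑ j ∈ m.divisors, muR r j * nu0 r (m / j) := by
    intro i hi
    simp only [mem_range] at hi
    rw [Finset.mul_sum]
    apply Finset.sum_congr rfl
    intro j hj
    obtain ⟨hjm, -⟩ := Nat.mem_divisors.mp hj
    have hj0 : 0 < j := Nat.pos_of_dvd_of_pos hjm (Nat.pos_of_ne_zero hm0)
    have hcpj : Nat.Coprime p j := Nat.Coprime.coprime_dvd_right hjm (Nat.coprime_ordCompl hp hn0)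
    have hdivj : 0 < m / j := Nat.div_pos (Nat.le_of_dvd (Nat.pos_of_ne_zero hm0) hjm) hj0
    have hcpdj : Nat.Coprime p (m / j) :=
      Nat.Coprime.coprime_dvd_right (Nat.div_dvd_of_dvd hjm) (Nat.coprime_ordCompl hp hn0)
    have hdiv : p ^ a * m / (p ^ i * j) = p ^ (a - i) * (m / j) := by
      rw [← Nat.div_mul_div_comm (pow_dvd_pow p (by omega : i ≤ a)) hjm,
        Nat.pow_div (by omega : i ≤ a) hp.pos]
    rw [hdiv, muR_mul r _ _ hr (Nat.Coprime.pow_left _ hcpj), muR_prime_pow r p i hr hp,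
      nu0_mul r _ _ (Nat.Coprime.pow_left _ hcpdj) (pow_ne_zero _ hp.pos.ne') hdivj.ne',
      nu0_prime_pow r p _ hp]
    ring
  rw [Finset.sum_congr rfl key, ← Finset.sum_mul, window_conv r a hr ha, zero_mul]

theorem h_bounded_by_rfull_tau (r : ℕ) (hr : 2 ≤ r) (k : ℤ) (hk : 1 ≤ k)
    (g : ℕ → ℤ) (hg : ∀ α : ℕ, α < r → g α = 1)
    (f : ℕ → ℤ) (hf1 : f 1 = 1)
    (hfmult : ∀ m n : ℕ, Nat.Coprime m n → f (m * n) = f m * f n)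
    (hfpp : ∀ (p α : ℕ), p.Prime → f (p ^ α) = g α)
    -- `ν` is the Dirichlet convolution inverse of `muR r`
    (ν : ℕ → ℤ) (hν1 : ν 1 = 1)
    (hνinv : ∀ n : ℕ, 2 ≤ n → ∑ d ∈ n.divisors, muR r d * ν (n / d) = 0)
    (h : ℕ → ℤ)
    (hdef : ∀ n : ℕ, 1 ≤ n →
      h n = ∑ d ∈ n.divisors, (if f (n / d) = k then 1 else 0) * ν d) :
    ∀ n : ℕ, 1 ≤ n → |h n| ≤ sFull r n * (n.divisors.card : ℤ) := by
  -- ν agrees with the explicit multiplicative function nu0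
  have hnu : ∀ n : ℕ, 1 ≤ n → ν n = nu0 r n := by
    intro n
    induction n using Nat.strong_induction_on with
    | _ n ih =>
      intro hn1
      rcases eq_or_lt_of_le hn1 with h1 | h2
      · rw [← h1, hν1, nu0_one]
      · have hn2 : 2 ≤ n := h2
        have hmem : 1 ∈ n.divisors := Nat.one_mem_divisors.mpr (by omega)
        have e1 := Finset.add_sum_erase n.divisors (fun d => muR r d * ν (n / d)) hmem
        have e2 := Finset.add_sum_erase n.divisors (fun d => muR r d * nu0 r (n / d)) hmem
        have heq : ∑ d ∈ n.divisors.erase 1, muR r d * ν (n / d)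
            = ∑ d ∈ n.divisors.erase 1, muR r d * nu0 r (n / d) := by
          apply Finset.sum_congr rfl
          intro d hd
          obtain ⟨hd1, hddvd⟩ := Finset.mem_erase.mp hd
          obtain ⟨hdn, hn0⟩ := Nat.mem_divisors.mp hddvd
          have hdpos : 0 < d := Nat.pos_of_dvd_of_pos hdn (by omega)
          have hlt : n / d < n := Nat.div_lt_self (by omega) (by omega)
          have hpos : 1 ≤ n / d := Nat.div_pos (Nat.le_of_dvd (by omega) hdn) hdpos
          rw [ih _ hlt hpos]
        rw [hνinv n hn2] at e1
        rw [conv_nu0 r hr n hn2] at e2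
        simp only [Nat.div_one, muR_one r hr, one_mul] at e1 e2
        omega
  intro n hn1
  by_cases hfull : IsRFull r n
  · -- r-full case: trivial bound by the number of divisors
    have hs : sFull r n = 1 := by simp [sFull, hn1, hfull]
    rw [hs, one_mul, hdef n hn1]
    calc |∑ d ∈ n.divisors, (if f (n / d) = k then 1 else 0) * ν d|
        ≤ ∑ d ∈ n.divisors, |(if f (n / d) = k then 1 else 0) * ν d| :=
          Finset.abs_sum_le_sum_abs _ _
      _ ≤ ∑ d ∈ n.divisors, 1 := by
          apply Finset.sum_le_sum
          intro d hd
          have hdpos : 1 ≤ d := Nat.pos_of_mem_divisors hd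
          rw [hnu d hdpos, abs_mul]
          have h1 : |if f (n / d) = k then (1:ℤ) else 0| ≤ 1 := by
            split_ifs <;> simp
          have h2 := abs_nu0_le r d
          nlinarith [abs_nonneg (if f (n / d) = k then (1:ℤ) else 0), abs_nonneg (nu0 r d)]
      _ = (n.divisors.card : ℤ) := by simp
  · -- non-r-full case: h n = 0
    have hs : sFull r n = 0 := by simp [sFull, hfull]
    rw [hs, zero_mul]
    have hzero : h n = 0 := by
      simp only [IsRFull, not_forall] at hfull
      obtain ⟨p, hp, hpd, hpr⟩ := hfull
      have hn0 : n ≠ 0 := by omega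
      set a := n.factorization p with hadef
      have ha : 1 ≤ a := hp.factorization_pos_of_dvd hn0 hpd
      have har : a < r := by
        by_contra hcon
        push_neg at hcon
        exact hpr (dvd_trans (pow_dvd_pow p hcon) (Nat.ordProj_dvd n p))
      set m := ordCompl[p] n with hmdef
      have hm0 : m ≠ 0 := (Nat.ordCompl_pos p hn0).ne'
      have hcop : Nat.Coprime (p ^ a) m := Nat.Coprime.pow_left _ (Nat.coprime_ordCompl hp hn0)
      have hneq : p ^ a * m = n := Nat.ordProj_mul_ordCompl_eq_self n p
      rw [hdef n hn1]
      have hsame : ∀ d ∈ n.divisors,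
          (if f (n / d) = k then (1:ℤ) else 0) * ν d
          = (if f (n / d) = k then (1:ℤ) else 0) * nu0 r d := by
        intro d hd
        rw [hnu d (Nat.pos_of_mem_divisors hd)]
      rw [Finset.sum_congr rfl hsame, ← hneq,
        sum_divisors_mul_coprime (fun d => (if f (p ^ a * m / d) = k then (1:ℤ) else 0) * nu0 r d)
          hcop, Nat.sum_divisors_prime_pow hp]
      have key : ∀ i ∈ range (a + 1),
          ∑ j ∈ m.divisors, (if f (p ^ a * m / (p ^ i * j)) = k then (1:ℤ) else 0)
            * nu0 r (p ^ i * j)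
          = cc r i * ∑ j ∈ m.divisors, (if f (m / j) = k then (1:ℤ) else 0) * nu0 r j := by
        intro i hi
        simp only [mem_range] at hi
        rw [Finset.mul_sum]
        apply Finset.sum_congr rfl
        intro j hj
        obtain ⟨hjm, -⟩ := Nat.mem_divisors.mp hj
        have hj0 : 0 < j := Nat.pos_of_dvd_of_pos hjm (Nat.pos_of_ne_zero hm0)
        have hcpj : Nat.Coprime p j :=
          Nat.Coprime.coprime_dvd_right hjm (Nat.coprime_ordCompl hp hn0)
        have hcpdj : Nat.Coprime p (m / j) :=
          Nat.Coprime.coprime_dvd_right (Nat.div_dvd_of_dvd hjm) (Nat.coprime_ordCompl hp hn0)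
        have hdiv : p ^ a * m / (p ^ i * j) = p ^ (a - i) * (m / j) := by
          rw [← Nat.div_mul_div_comm (pow_dvd_pow p (by omega : i ≤ a)) hjm,
            Nat.pow_div (by omega : i ≤ a) hp.pos]
        have hfval : f (p ^ a * m / (p ^ i * j)) = f (m / j) := by
          rw [hdiv, hfmult _ _ (Nat.Coprime.pow_left _ hcpdj), hfpp p (a - i) hp,
            hg (a - i) (by omega), one_mul]
        rw [hfval, nu0_mul r _ _ (Nat.Coprime.pow_left _ hcpj) (pow_ne_zero _ hp.pos.ne') hj0.ne',
          nu0_prime_pow r p _ hp]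
        ring
      rw [Finset.sum_congr rfl key, ← Finset.sum_mul, sum_cc_initial r a hr ha har, zero_mul]
    rw [hzero]
    simp
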